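/- Let $\lambda_k = k^2\pi^2$ and $q_k = 1/(k(\log k)^2)$ for $k \ge 2$. For every $t > 0$ and every $r > 0$, the series $\sum_{k=2}^{\infty} \lambda_k^{r}\,(1 - e^{-2\lambda_k t})\, q_k$ diverges (equals $+\infty$), whereas for $r = 0$ it converges. -/
import Mathlib

open Real


lemma bertrand_aux : Summable (fun n : ℕ => 1 / (((n:ℝ)+2) * Real.log ((n:ℝ)+2) ^ 2)) := by
  rw [← summable_condensed_iff_of_nonneg (fun n => by positivity) ?mono]
  case mono =>
    intro m n hm hmn
    have hm0 : (0:ℝ) ≤ (m:ℝ) := Nat.cast_nonneg m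
    have hmn' : (m:ℝ) ≤ (n:ℝ) := Nat.cast_le.mpr hmn
    have hlogm : 0 < Real.log ((m:ℝ)+2) := Real.log_pos (by linarith)
    have hle : ((m:ℝ)+2) ≤ ((n:ℝ)+2) := by linarith
    apply one_div_le_one_div_of_le
    · positivity
    · exact mul_le_mul hle
        (pow_le_pow_left₀ hlogm.le (Real.log_le_log (by linarith) hle) 2)
        (by positivity) (by linarith)
  · apply Summable.of_nonneg_of_le (fun k => by positivity)
      (fun k => ?_)
      (((summable_nat_add_iff 1).mpr (Real.summable_one_div_nat_pow.mpr one_lt_two)).mul_left (4 / Real.log 2 ^ 2))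
    have h2 : (0:ℝ) < Real.log 2 := Real.log_pos (by norm_num)
    set y : ℝ := ((2^k : ℕ):ℝ) + 2 with hy
    have hyval : y = (2:ℝ)^k + 2 := by push_cast [hy]; ring
    have hp : (0:ℝ) < 2^k := by positivity
    have hy2 : (2:ℝ)^k ≤ y := by rw [hyval]; linarith
    have hypos : (0:ℝ) < y := lt_of_lt_of_le hp hy2
    have hlogy : ((k:ℝ)+1) * Real.log 2 ≤ 2 * Real.log y := by
      have h1 : (2:ℝ)^(k+1) ≤ y^2 := by
        rw [hyval, pow_succ]; nlinarith [sq_nonneg ((2:ℝ)^k)]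
      have := Real.log_le_log (by positivity) h1
      rw [Real.log_pow, Real.log_pow] at this
      push_cast at this ⊢
      linarith
    have hk0 : (0:ℝ) ≤ (k:ℝ) := Nat.cast_nonneg k
    have hlogypos : 0 < Real.log y := by nlinarith
    have hA : (((k:ℝ)+1) * Real.log 2)^2 ≤ (2 * Real.log y)^2 :=
      pow_le_pow_left₀ (by positivity) hlogy 2
    rw [mul_one_div, div_mul_div_comm, mul_one, div_le_div_iff₀ (by positivity) (by positivity)]
    push_cast
    nlinarith [mul_le_mul_of_nonneg_left hA hp.le,
      mul_le_mul_of_nonneg_right hy2 (sq_nonneg (Real.log y))]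


theorem stmt_10 (t : ℝ) (ht : 0 < t) :
    (∀ r : ℝ, 0 < r →
      ¬ Summable (fun k : ℕ =>
        (((k + 2 : ℝ) ^ 2 * Real.pi ^ 2) ^ r)
          * (1 - Real.exp (-2 * ((k + 2 : ℝ) ^ 2 * Real.pi ^ 2) * t))
          * (1 / ((k + 2 : ℝ) * Real.log (k + 2) ^ 2)))) ∧
    Summable (fun k : ℕ =>
      (((k + 2 : ℝ) ^ 2 * Real.pi ^ 2) ^ (0 : ℝ))
        * (1 - Real.exp (-2 * ((k + 2 : ℝ) ^ 2 * Real.pi ^ 2) * t))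
        * (1 / ((k + 2 : ℝ) * Real.log (k + 2) ^ 2))) := by
  constructor
  · intro r hr
    intro hsum
    have hπ : (0:ℝ) < Real.pi := Real.pi_pos
    set c : ℝ := 1 - Real.exp (-8 * Real.pi ^ 2 * t) with hc
    have hc0 : 0 < c := by
      have h1 : Real.exp (-8 * Real.pi ^ 2 * t) < 1 := by
        rw [Real.exp_lt_one_iff]
        have h8 : (0:ℝ) < 8 * Real.pi ^ 2 * t := by positivity
        linarith
      rw [hc]; linarith
    set C : ℝ := (Real.pi ^ 2) ^ r * c * r ^ 2 with hC
    have hC0 : 0 < C := by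
      have := Real.rpow_pos_of_pos (by positivity : (0:ℝ) < Real.pi ^ 2) r
      positivity
    have key : ∀ k : ℕ, C * (1 / ((k:ℝ)+2)) ≤
        (((k + 2 : ℝ) ^ 2 * Real.pi ^ 2) ^ r)
          * (1 - Real.exp (-2 * ((k + 2 : ℝ) ^ 2 * Real.pi ^ 2) * t))
          * (1 / ((k + 2 : ℝ) * Real.log (k + 2) ^ 2)) := by
      intro k
      have hk : (0:ℝ) ≤ (k:ℝ) := Nat.cast_nonneg k
      set x : ℝ := (k:ℝ) + 2 with hx
      have hx2 : (2:ℝ) ≤ x := by rw [hx]; linarith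
      have hx0 : (0:ℝ) < x := by linarith
      have hlog : 0 < Real.log x := Real.log_pos (by linarith)
      have hrw : (x ^ 2 * Real.pi ^ 2) ^ r = x ^ (2 * r) * (Real.pi ^ 2) ^ r := by
        rw [Real.mul_rpow (sq_nonneg x) (sq_nonneg _), ← Real.rpow_natCast x 2,
          ← Real.rpow_mul hx0.le]
        norm_num
      have hB : c ≤ 1 - Real.exp (-2 * (x ^ 2 * Real.pi ^ 2) * t) := by
        have h1 : Real.exp (-2 * (x ^ 2 * Real.pi ^ 2) * t) ≤ Real.exp (-8 * Real.pi ^ 2 * t) := by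
          apply Real.exp_le_exp.mpr
          have hx4 : (4:ℝ) ≤ x ^ 2 := by nlinarith
          nlinarith [mul_nonneg (mul_nonneg (by linarith : (0:ℝ) ≤ x ^ 2 - 4) (sq_nonneg Real.pi)) ht.le]
        rw [hc]; linarith
      have hBpos : 0 < 1 - Real.exp (-2 * (x ^ 2 * Real.pi ^ 2) * t) := lt_of_lt_of_le hc0 hB
      have hlogle : Real.log x ≤ x ^ r / r := Real.log_le_rpow_div hx0.le hr
      have hsq : r ^ 2 * Real.log x ^ 2 ≤ x ^ (2 * r) := by
        have h1 : Real.log x ^ 2 ≤ (x ^ r / r) ^ 2 := pow_le_pow_left₀ hlog.le hlogle 2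
        have h2 : (x ^ r / r) ^ 2 = x ^ (2 * r) / r ^ 2 := by
          rw [div_pow, mul_comm 2 r, Real.rpow_mul hx0.le, Real.rpow_two]
        rw [h2] at h1
        rw [← le_div_iff₀' (by positivity)]
        linarith
      have hπr : 0 < (Real.pi ^ 2) ^ r := Real.rpow_pos_of_pos (by positivity) r
      rw [hrw, hC]
      rw [mul_one_div, mul_one_div, div_le_div_iff₀ (by positivity) (by positivity)]
      have hxr : 0 < x ^ (2*r) := Real.rpow_pos_of_pos hx0 (2*r)
      calc (Real.pi ^ 2) ^ r * c * r ^ 2 * (x * Real.log x ^ 2)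
          = ((Real.pi ^ 2) ^ r * c * (r ^ 2 * Real.log x ^ 2)) * x := by ring
        _ ≤ ((Real.pi ^ 2) ^ r * (1 - Real.exp (-2 * (x ^ 2 * Real.pi ^ 2) * t)) * x ^ (2*r)) * x := by
            gcongr
        _ = x ^ (2 * r) * (Real.pi ^ 2) ^ r * (1 - Real.exp (-2 * (x ^ 2 * Real.pi ^ 2) * t)) * x := by ring
    have h1 : Summable (fun k : ℕ => C * (1 / ((k:ℝ)+2))) :=
      Summable.of_nonneg_of_le (fun k => by positivity) key hsum
    have h2 : Summable (fun k : ℕ => 1 / ((k:ℝ)+2)) := by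
      have := h1.mul_left C⁻¹
      simpa [← mul_assoc, inv_mul_cancel₀ hC0.ne'] using this
    have h3 : Summable (fun n : ℕ => 1 / ((n:ℝ))) := by
      rw [← summable_nat_add_iff 2]
      simpa using h2
    exact Real.not_summable_one_div_natCast h3
  ·
    have hexp : ∀ k : ℕ, Real.exp (-2 * (((k:ℝ) + 2) ^ 2 * Real.pi ^ 2) * t) ≤ 1 := by
      intro k
      rw [Real.exp_le_one_iff]
      have hpos : (0:ℝ) < ((k:ℝ) + 2) ^ 2 * Real.pi ^ 2 := by positivity
      nlinarith [mul_pos hpos ht]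
    apply Summable.of_nonneg_of_le ?nn ?le bertrand_aux
    case nn =>
      intro k
      rw [Real.rpow_zero, one_mul]
      exact mul_nonneg (by linarith [hexp k]) (by positivity)
    case le =>
      intro k
      rw [Real.rpow_zero, one_mul]
      have h1 : 0 < Real.exp (-2 * (((k:ℝ) + 2) ^ 2 * Real.pi ^ 2) * t) := Real.exp_pos _
      have h2 : (0:ℝ) ≤ 1 / (((k:ℝ) + 2) * Real.log ((k:ℝ) + 2) ^ 2) := by positivity
      nlinarith
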